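/- Let (A, a) be a 3CNF system over n ≥ 1 variables with no satisfying assignment. Then the point (x, y, w) with x_i = 1/2 for i = 1,…,n, y = 0, and w = 0 is an optimal solution of P3SAT(A, a), and v(P3SAT(A, a)) = 0. -/

import Mathlib

noncomputable section

/-- The set of minimizers of `g` over `S`. -/
def argminOn {α : Type} (g : α → ℝ) (S : Set α) : Set α :=
  {x ∈ S | ∀ y ∈ S, g x ≤ g y}

/-- The lower-level feasible set of `P3SAT(A, a)`:
`{w' : −w'_i ≤ x_i − 1/2 ≤ w'_i, 0 ≤ w'_i ≤ 1}`. -/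
def lowW (n : ℕ) (x : Fin n → ℝ) : Set (Fin n → ℝ) :=
  {w' | ∀ i, (-(w' i) ≤ x i - 1 / 2 ∧ x i - 1 / 2 ≤ w' i) ∧ 0 ≤ w' i ∧ w' i ≤ 1}

/-- The feasible set of the bilevel program `P3SAT(A, a)`: triples `(x, y, w)`. -/
def F3SAT {n p : ℕ} (A : Matrix (Fin p) (Fin n) ℤ) (a : Fin p → ℤ) :
    Set ((Fin n → ℝ) × ℝ × (Fin n → ℝ)) :=
  {q | (∀ j, 3 / 2 - q.2.1 / 2 - (a j : ℝ) ≤ ∑ i, (A j i : ℝ) * q.1 i) ∧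
       (∀ i, 1 / 2 - q.2.1 / 2 ≤ q.1 i ∧ q.1 i ≤ 1 / 2 + q.2.1 / 2 ∧
         0 ≤ q.1 i ∧ q.1 i ≤ 1) ∧
       0 ≤ q.2.1 ∧ q.2.1 ≤ 1 ∧
       q.2.2 ∈ argminOn (fun w' => ∑ i, w' i) (lowW n q.1)}

/-- The objective of `P3SAT(A, a)`. -/
def obj3 (n : ℕ) (q : (Fin n → ℝ) × ℝ × (Fin n → ℝ)) : ℝ :=
  2 * ∑ i, (q.2.1 - 2 * q.2.2 i) - (2 / (n : ℝ)) * ∑ i, q.2.2 i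
/-- `(A, a)` is a 3CNF system. -/
def Is3CNF {n p : ℕ} (A : Matrix (Fin p) (Fin n) ℤ) (a : Fin p → ℤ) : Prop :=
  ∃ P N : Matrix (Fin p) (Fin n) ℤ,
    (∀ j i, 0 ≤ P j i) ∧ (∀ j i, 0 ≤ N j i) ∧ A = P - N ∧
    (∀ j, a j = ∑ i, N j i) ∧ (∀ j, (∑ i, (P j i + N j i)) = 3)

/-- `(A, a)` has a satisfying assignment. -/
def SatAssign {n p : ℕ} (A : Matrix (Fin p) (Fin n) ℤ) (a : Fin p → ℤ) : Prop :=
  ∃ μ : Fin n → ℤ, (∀ i, μ i = 0 ∨ μ i = 1) ∧ ∀ j, 1 - a j ≤ ∑ i, A j i * μ i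

/-- if the 3CNF system `(A, a)` over `n ≥ 1` variables has no satisfying
assignment, then `(x, y, w)` with `x_i = 1/2`, `y = 0`, `w = 0` is an optimal solution of
`P3SAT(A, a)` and `v(P3SAT(A, a)) = 0`. -/
theorem stmt4 (n p : ℕ) (hn : 1 ≤ n)
    (A : Matrix (Fin p) (Fin n) ℤ) (a : Fin p → ℤ) (h3 : Is3CNF A a)
    (hunsat : ¬SatAssign A a) :
    ((fun _ => (1 / 2 : ℝ)), (0 : ℝ), (fun _ => (0 : ℝ))) ∈ F3SAT A a ∧
    (∀ q ∈ F3SAT A a,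
      obj3 n ((fun _ => (1 / 2 : ℝ)), (0 : ℝ), (fun _ => (0 : ℝ))) ≤ obj3 n q) ∧
    obj3 n ((fun _ => (1 / 2 : ℝ)), (0 : ℝ), (fun _ => (0 : ℝ))) = 0 := by
  obtain ⟨P, N, hP, hN, hA, ha, hPN⟩ := h3
  have hAsum : ∀ j, (∑ i, A j i) = 3 - 2 * a j := by
    intro j
    have h1 : ∑ i, A j i = ∑ i, P j i - ∑ i, N j i := by
      rw [hA]; simp [Matrix.sub_apply, Finset.sum_sub_distrib]
    have h2 : ∑ i, P j i + ∑ i, N j i = 3 := by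
      rw [← Finset.sum_add_distrib]; exact hPN j
    rw [h1, ha j]; omega
  -- feasibility of the candidate point
  have hfeas : ((fun _ => (1 / 2 : ℝ)), (0 : ℝ), (fun _ => (0 : ℝ))) ∈ F3SAT A a := by
    refine ⟨?_, ?_, le_refl _, zero_le_one, ?_, ?_⟩
    · intro j
      have : ∑ i, (A j i : ℝ) * (1 / 2) = ((∑ i, A j i : ℤ) : ℝ) * (1 / 2) := by
        push_cast; rw [Finset.sum_mul]
      simp only [this, hAsum j]
      push_cast; linarith
    · intro i; norm_num
    · intro i; norm_num
    · intro w' hw'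
      simp only
      refine Finset.sum_le_sum fun i _ => (hw' i).2.1
  refine ⟨hfeas, ?_, by simp [obj3]⟩
  have hobj0 : obj3 n ((fun _ => (1 / 2 : ℝ)), (0 : ℝ), (fun _ => (0 : ℝ))) = 0 := by
    simp [obj3]
  intro q hq
  rw [hobj0]
  by_contra hlt
  push_neg at hlt
  obtain ⟨hc, hbox, hy0, hy1, hwS, hwmin⟩ := hq
  set x := q.1 with hx
  set y := q.2.1 with hy
  set w := q.2.2 with hw
  -- w i = |x i - 1/2|
  have hv : (fun i => |x i - 1 / 2|) ∈ lowW n x := by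
    intro i
    obtain ⟨_, _, h0, h1⟩ := hbox i
    refine ⟨⟨neg_abs_le _, le_abs_self _⟩, abs_nonneg _, ?_⟩
    rw [abs_le]; constructor <;> linarith
  have hvle : ∀ i, |x i - 1 / 2| ≤ w i := by
    intro i
    exact abs_le.mpr ⟨by linarith [(hwS i).1.1], (hwS i).1.2⟩
  have hsle : ∑ i, w i ≤ ∑ i, |x i - 1 / 2| := hwmin _ hv
  have hweq : ∀ i, w i = |x i - 1 / 2| := by
    have hz : ∑ i, (w i - |x i - 1 / 2|) = 0 := by
      have := Finset.sum_le_sum (fun i (_ : i ∈ Finset.univ) => hvle i)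
      rw [Finset.sum_sub_distrib]
      linarith
    intro i
    have h := (Finset.sum_eq_zero_iff_of_nonneg
      (fun i _ => by linarith [hvle i])).mp hz i (Finset.mem_univ i)
    linarith
  have hwhalf : ∀ i, w i ≤ y / 2 := by
    intro i
    obtain ⟨hb1, hb2, _, _⟩ := hbox i
    rw [hweq i, abs_le]; constructor <;> linarith
  have hwge : ∀ i, 0 ≤ w i := fun i => (hwS i).2.1
  set s := ∑ i, (y / 2 - w i) with hs
  have hs0 : 0 ≤ s := Finset.sum_nonneg fun i _ => by linarith [hwhalf i]
  have hsumy : ∑ _i : Fin n, (y : ℝ) = n * y := by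
    rw [Finset.sum_const, Finset.card_univ, Fintype.card_fin, nsmul_eq_mul]
  have hsumy2 : ∑ _i : Fin n, (y / 2 : ℝ) = n * (y / 2) := by
    rw [Finset.sum_const, Finset.card_univ, Fintype.card_fin, nsmul_eq_mul]
  have hseq : s = n * (y / 2) - ∑ i, w i := by
    rw [hs, Finset.sum_sub_distrib, hsumy2]
  have hobjq : obj3 n q = 4 * s - (2 / (n : ℝ)) * ∑ i, w i := by
    have : ∑ i, (y - 2 * w i) = n * y - 2 * ∑ i, w i := by
      rw [Finset.sum_sub_distrib, hsumy, ← Finset.mul_sum]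
    rw [obj3, ← hy, ← hw, this, hseq]; ring
  have hnpos : (0 : ℝ) < n := by exact_mod_cast hn
  have hsww : (2 / (n : ℝ)) * ∑ i, w i ≤ y := by
    have h1 : ∑ i, w i ≤ n * (y / 2) := by
      rw [← hsumy2]; exact Finset.sum_le_sum fun i _ => hwhalf i
    have h2 : (2 / (n : ℝ)) * ∑ i, w i ≤ (2 / (n : ℝ)) * (n * (y / 2)) := by
      apply mul_le_mul_of_nonneg_left h1 (by positivity)
    have h3 : (2 / (n : ℝ)) * (n * (y / 2)) = y := by field_simp
    linarith
  have hy4s : 4 * s < y := by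
    rw [hobjq] at hlt; linarith
  -- rounding
  set μ : Fin n → ℤ := fun i => if 1 / 2 ≤ x i then 1 else 0 with hμ
  have hμd : ∀ i, |(μ i : ℝ) - x i| = 1 / 2 - w i := by
    intro i
    obtain ⟨_, _, h0, h1⟩ := hbox i
    rw [hweq i]
    by_cases h : 1 / 2 ≤ x i
    · have h1 : μ i = 1 := by simp only [hμ]; exact if_pos h
      have : (μ i : ℝ) = 1 := by rw [h1]; norm_num
      rw [this, abs_of_nonneg (by linarith), abs_of_nonneg (by linarith)]; ring
    · push_neg at h
      have h1 : μ i = 0 := by simp only [hμ]; exact if_neg (not_le.mpr h)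
      have : (μ i : ℝ) = 0 := by rw [h1]; norm_num
      rw [this, abs_of_nonpos (by linarith), abs_of_nonpos (by linarith)]; ring
  have hclause : ∀ j, (1 : ℤ) - a j ≤ ∑ i, A j i * μ i := by
    intro j
    have key : ∑ i, (A j i : ℝ) * x i - ∑ i, (A j i : ℝ) * (μ i : ℝ)
        ≤ ∑ i, ((P j i : ℝ) + (N j i : ℝ)) * (1 / 2 - w i) := by
      rw [← Finset.sum_sub_distrib]
      refine Finset.sum_le_sum fun i _ => ?_
      have habs : |(A j i : ℝ)| ≤ (P j i : ℝ) + (N j i : ℝ) := by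
        have : A j i = P j i - N j i := by rw [hA]; simp [Matrix.sub_apply]
        rw [this]
        have hp := hP j i; have hn' := hN j i
        push_cast
        rw [abs_le]; constructor
        · push_cast; linarith [ (show (0:ℝ) ≤ (P j i : ℝ) by exact_mod_cast hp), (show (0:ℝ) ≤ (N j i : ℝ) by exact_mod_cast hn')]
        · push_cast; linarith [ (show (0:ℝ) ≤ (P j i : ℝ) by exact_mod_cast hp), (show (0:ℝ) ≤ (N j i : ℝ) by exact_mod_cast hn')]
      calc (A j i : ℝ) * x i - (A j i : ℝ) * (μ i : ℝ)
          ≤ |(A j i : ℝ) * x i - (A j i : ℝ) * (μ i : ℝ)| := le_abs_self _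
        _ = |(A j i : ℝ)| * |(μ i : ℝ) - x i| := by
            rw [← abs_mul]; rw [abs_sub_comm]; ring_nf
        _ ≤ ((P j i : ℝ) + (N j i : ℝ)) * (1 / 2 - w i) := by
            rw [hμd i]
            apply mul_le_mul_of_nonneg_right habs
            linarith [hwhalf i, hy1, hwge i, (show w i ≤ 1/2 by linarith [hwhalf i, hy1])]
    have hsplit : ∑ i, ((P j i : ℝ) + (N j i : ℝ)) * (1 / 2 - w i)
        ≤ 3 * (1 / 2 - y / 2) + 3 * s := by
      have hPNle : ∀ i, (P j i : ℝ) + (N j i : ℝ) ≤ 3 := by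
        intro i
        have h1 : P j i + N j i ≤ ∑ k, (P j k + N j k) :=
          Finset.single_le_sum (f := fun k => P j k + N j k)
            (fun k _ => add_nonneg (hP j k) (hN j k)) (Finset.mem_univ i)
        rw [hPN j] at h1
        exact_mod_cast h1
      have hPN0 : ∀ i, (0 : ℝ) ≤ (P j i : ℝ) + (N j i : ℝ) := by
        intro i
        have := hP j i; have := hN j i
        positivity
      have e1 : ∀ i, ((P j i : ℝ) + (N j i : ℝ)) * (1 / 2 - w i)
          = ((P j i : ℝ) + (N j i : ℝ)) * (1 / 2 - y / 2)
            + ((P j i : ℝ) + (N j i : ℝ)) * (y / 2 - w i) := by intro i; ring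
      have e2 : ∑ i, ((P j i : ℝ) + (N j i : ℝ)) * (1 / 2 - y / 2) = 3 * (1 / 2 - y / 2) := by
        rw [← Finset.sum_mul]
        congr 1
        have : ((∑ i, (P j i + N j i) : ℤ) : ℝ) = ((3 : ℤ) : ℝ) := by rw [hPN j]
        push_cast at this
        convert this using 2 <;> norm_num
      have e3 : ∑ i, ((P j i : ℝ) + (N j i : ℝ)) * (y / 2 - w i) ≤ 3 * s := by
        rw [hs, Finset.mul_sum]
        refine Finset.sum_le_sum fun i _ => ?_
        apply mul_le_mul_of_nonneg_right (hPNle i) (by linarith [hwhalf i])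
      calc ∑ i, ((P j i : ℝ) + (N j i : ℝ)) * (1 / 2 - w i)
          = ∑ i, (((P j i : ℝ) + (N j i : ℝ)) * (1 / 2 - y / 2)
            + ((P j i : ℝ) + (N j i : ℝ)) * (y / 2 - w i)) := by
            exact Finset.sum_congr rfl fun i _ => e1 i
        _ = (∑ i, ((P j i : ℝ) + (N j i : ℝ)) * (1 / 2 - y / 2))
            + ∑ i, ((P j i : ℝ) + (N j i : ℝ)) * (y / 2 - w i) := Finset.sum_add_distrib
        _ ≤ 3 * (1 / 2 - y / 2) + 3 * s := by rw [e2]; linarith [e3]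
    have hcj := hc j
    have hfinal : (-(a j) : ℝ) < ∑ i, (A j i : ℝ) * (μ i : ℝ) := by
      have : ∑ i, (A j i : ℝ) * (μ i : ℝ)
          ≥ (3 / 2 - y / 2 - (a j : ℝ)) - (3 * (1 / 2 - y / 2) + 3 * s) := by
        linarith [key, hsplit, hcj]
      have hy0' : 0 < y := by linarith
      linarith
    have hcast : ((∑ i, A j i * μ i : ℤ) : ℝ) = ∑ i, (A j i : ℝ) * (μ i : ℝ) := by
      push_cast; ring
    have : (-(a j) : ℤ) < ∑ i, A j i * μ i := by
      have := hfinal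
      rw [← hcast] at this
      exact_mod_cast this
    omega
  refine hunsat ⟨μ, fun i => ?_, hclause⟩
  by_cases h : 1 / 2 ≤ x i
  · exact Or.inr (by simp only [hμ]; exact if_pos h)
  · exact Or.inl (by simp only [hμ]; exact if_neg h)
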